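/- If f, g ∈ F[y²] (polynomials in y²) satisfy f(y)² = (1 − y⁴)·y²·g(y)², then f = g = 0. -/
import Mathlib

open Polynomial

/-- If `f, g ∈ F[y²]` (i.e. `f = f₀(y²)`, `g = g₀(y²)`) satisfy
`f² = (1 − y⁴)·y²·g²`, then `f = g = 0`. -/
theorem stmt7 (F : Type*) [Field F] [CharZero F] (f₀ g₀ : Polynomial F)
    (h : (f₀.comp (X ^ 2)) ^ 2 = (1 - X ^ 4) * X ^ 2 * (g₀.comp (X ^ 2)) ^ 2) :
    f₀.comp (X ^ 2) = 0 ∧ g₀.comp (X ^ 2) = 0 := by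
  have key : f₀ ^ 2 = (1 - X ^ 2) * X * g₀ ^ 2 := by
    apply expand_injective (R := F) (n := 2) (by norm_num)
    have e : ∀ p : F[X], expand F 2 p = p.comp (X ^ 2) := fun p => rfl
    simp only [e, pow_comp, mul_comp, sub_comp, one_comp, X_comp]
    rw [h]; ring
  have hd3 : ((1 - X ^ 2) * X : F[X]).natDegree = 3 := by compute_degree!
  have hne : ((1 - X ^ 2) * X : F[X]) ≠ 0 := by
    intro h0; rw [h0, natDegree_zero] at hd3; exact absurd hd3 (by norm_num)
  have hg : g₀ = 0 := by
    by_contra hg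
    have hdeg := congrArg natDegree key
    rw [natDegree_pow, natDegree_mul hne (pow_ne_zero 2 hg), natDegree_pow, hd3] at hdeg
    omega
  have hf : f₀ = 0 := by
    have : f₀ ^ 2 = 0 := by rw [key, hg]; ring
    exact pow_eq_zero_iff (by norm_num) |>.mp this
  simp [hf, hg]
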